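/- Let M be an R-module, U a minimal complete injective resolution of M, and V any other complete injective resolution of M. Then U is isomorphic to a direct summand of V, with complementary summand a contractible complex. -/

import Mathlib

open CategoryTheory CategoryTheory.Limits

universe u

variable (R : Type u) [CommRing R]

/-- The `a`-torsion submodule `Γ_a(M) = {x ∈ M | aⁿ x = 0 for some n}`. -/
def aTorsion (a : Ideal R) (M : Type u) [AddCommGroup M] [Module R M] : Submodule R M where
  carrier := {x | ∃ n : ℕ, ∀ r ∈ a ^ n, r • x = 0}
  zero_mem' := ⟨0, fun r _ => smul_zero r⟩
  add_mem' := by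
    intro x y hx hy
    obtain ⟨n, hn⟩ := hx
    obtain ⟨m, hm⟩ := hy
    exact ⟨n + m, fun r hr => by
      rw [smul_add, hn r (Ideal.pow_le_pow_right (Nat.le_add_right n m) hr),
        hm r (Ideal.pow_le_pow_right (Nat.le_add_left m n) hr), add_zero]⟩
  smul_mem' := by
    intro c x hx
    obtain ⟨n, hn⟩ := hx
    exact ⟨n, fun r hr => by rw [smul_comm, hn r hr, smul_zero]⟩

/-- Functoriality of the `a`-torsion submodule. -/
def aTorsionMap (a : Ideal R) {M N : Type u} [AddCommGroup M] [Module R M]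
    [AddCommGroup N] [Module R N] (f : M →ₗ[R] N) :
    aTorsion R a M →ₗ[R] aTorsion R a N :=
  f.restrict (p := aTorsion R a M) (q := aTorsion R a N) (fun x hx => by
    obtain ⟨n, hn⟩ := hx
    exact ⟨n, fun r hr => by rw [← map_smul, hn r hr, map_zero]⟩)

/-- The `a`-torsion functor `Γ_a : Mod R → Mod R`. -/
def torsionFunctor (a : Ideal R) : ModuleCat.{u} R ⥤ ModuleCat.{u} R where
  obj M := ModuleCat.of R (aTorsion R a M)
  map f := ModuleCat.ofHom (aTorsionMap R a f.hom)
  map_id := by intros; rfl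
  map_comp := by intros; rfl

instance (a : Ideal R) : (torsionFunctor R a).Additive where
  map_add := by intros; ext x; rfl

/-- The `a`-torsion functor applied degreewise to a cochain complex. -/
def torsionCpx (a : Ideal R) (U : CochainComplex (ModuleCat.{u} R) ℤ) :
    CochainComplex (ModuleCat.{u} R) ℤ :=
  ((torsionFunctor R a).mapHomologicalComplex (ComplexShape.up ℤ)).obj U


/-- A totally acyclic complex of injective modules. -/
structure IsTotallyAcyclicInjCpx (U : CochainComplex (ModuleCat.{u} R) ℤ) : Prop where
  inj : ∀ i : ℤ, Injective (U.X i)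
  acyclic : ∀ i : ℤ, U.ExactAt i
  hom_acyclic : ∀ (J : ModuleCat.{u} R), Injective J → ∀ (i : ℤ) (g : J ⟶ U.X i),
    g ≫ U.d i (i + 1) = 0 → ∃ h : J ⟶ U.X (i - 1), h ≫ U.d (i - 1) i = g

/-- `ι : M ⟶ I.X 0` is an injective resolution of `M` (with `I` a ℤ-indexed cochain
complex vanishing in negative degrees). -/
structure IsInjRes (M : ModuleCat.{u} R) (I : CochainComplex (ModuleCat.{u} R) ℤ)
    (ι : M ⟶ I.X 0) : Prop where
  inj : ∀ i : ℤ, Injective (I.X i)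
  zero_neg : ∀ i < (0 : ℤ), IsZero (I.X i)
  mono : Function.Injective ι
  exact_zero : LinearMap.range ι.hom = LinearMap.ker (I.d 0 1).hom
  exact_pos : ∀ i > (0 : ℤ), I.ExactAt i

/-- A complete injective resolution of `M`. -/
structure IsCompleteInjRes (M : ModuleCat.{u} R) (I U : CochainComplex (ModuleCat.{u} R) ℤ)
    (ι : M ⟶ I.X 0) (ν : I ⟶ U) : Prop where
  res : IsInjRes R M I ι
  totAcyclic : IsTotallyAcyclicInjCpx R U
  iso_ge : ∃ n : ℤ, ∀ i ≥ n, IsIso (ν.f i)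

/-- A complex is minimal if every self homotopy equivalence is an isomorphism. -/
def IsMinimalCpx (C : CochainComplex (ModuleCat.{u} R) ℤ) : Prop :=
  ∀ e : HomotopyEquiv C C, IsIso e.hom

/-- The data of a minimal complete injective resolution of `M`. -/
structure MinCIR (M : ModuleCat.{u} R) where
  I : CochainComplex (ModuleCat.{u} R) ℤ
  U : CochainComplex (ModuleCat.{u} R) ℤ
  ι : M ⟶ I.X 0
  ν : I ⟶ U
  complete : IsCompleteInjRes R M I U ι ν
  minI : IsMinimalCpx R I
  minU : IsMinimalCpx R U

/-- The stable local cohomology module `Γ^stab_a(M) = Z⁰(Γ_a(U))` computed from a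
totally acyclic complex `U` (the complete injective resolution of `M`). -/
def stabLC (a : Ideal R) (U : CochainComplex (ModuleCat.{u} R) ℤ) : ModuleCat.{u} R :=
  ModuleCat.of R (LinearMap.ker ((torsionCpx R a U).d 0 1).hom)

/-- A Gorenstein injective module: a cycle of a totally acyclic complex of injectives. -/
def GorensteinInjective (G : ModuleCat.{u} R) : Prop :=
  ∃ U : CochainComplex (ModuleCat.{u} R) ℤ, IsTotallyAcyclicInjCpx R U ∧
    Nonempty (G ≃ₗ[R] LinearMap.ker (U.d 0 1).hom)

/-- Isomorphism in the stable category of Gorenstein injective modules: `X ⊕ J₁ ≅ Y ⊕ J₂`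
for some injective modules `J₁`, `J₂`. -/
def StablyIsomorphic (X Y : ModuleCat.{u} R) : Prop :=
  ∃ J₁ J₂ : ModuleCat.{u} R, Injective J₁ ∧ Injective J₂ ∧
    Nonempty ((X × J₁) ≃ₗ[R] (Y × J₂))

/-- `M` has injective dimension at most `n`. -/
def InjDimLE (M : ModuleCat.{u} R) (n : ℕ) : Prop :=
  ∃ (I : CochainComplex (ModuleCat.{u} R) ℤ) (ι : M ⟶ I.X 0),
    IsInjRes R M I ι ∧ ∀ i : ℤ, i > (n : ℤ) → IsZero (I.X i)

/-- `M` has finite injective dimension. -/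
def FiniteInjDim (M : ModuleCat.{u} R) : Prop := ∃ n : ℕ, InjDimLE R M n

/-- A Gorenstein ring: commutative Noetherian and every localization at a prime has finite
self-injective dimension. -/
def IsGorensteinRing : Prop :=
  IsNoetherianRing R ∧ ∀ (p : Ideal R) (hp : p.IsPrime),
    haveI := hp
    FiniteInjDim (Localization.AtPrime p)
      (ModuleCat.of (Localization.AtPrime p) (Localization.AtPrime p))

/-- A complex is contractible if its identity is null-homotopic. -/
def ContractibleCpx (C : CochainComplex (ModuleCat.{u} R) ℤ) : Prop :=
  Nonempty (Homotopy (𝟙 C) 0)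

/-!
Comparison maps `α : I ⟶ J` and `β : J ⟶ I` lifting `𝟙 M` exist, and `α ≫ β`, `β ≫ α` are
homotopic to the identities. In high degrees `ν` and `ν'` are isomorphisms, so `α`, `β` and these
homotopies can be read as maps and homotopies between `U` and `V` in high degrees. Since `U` and `V`
consist of injectives and `Hom(E, U)`, `Hom(E, V)` are acyclic for injective `E`, chain maps and
null-homotopies given in high degrees extend downwards to all degrees; this makes `U` and `V`
homotopy equivalent via some `f : U ⟶ V`, `g : V ⟶ U`. Minimality of `U` makes `f ≫ g`
invertible, so `f` is split by `g' = g ≫ (f ≫ g)⁻¹`, and `V ≅ U ⊞ ker g'`; the kernel is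
contractible because `g' ≫ f` is homotopic to `𝟙 V`.
-/

section RankRecursion

variable {ι : Type*} {X : ι → Type*} (σ : ι → ι) (ρ : ι → ℕ) (C : ∀ i, X i → X (σ i) → Prop)

/-- Pairs `(s i, s (σ i))` are built together so that the relation `C` is available for the next
lift. -/
noncomputable def rankRec (hρ : ∀ i, ρ i ≠ 0 → ρ (σ i) < ρ i) (s₀ : ∀ i, X i)
    (hs₀ : ∀ i, ρ i = 0 → C i (s₀ i) (s₀ (σ i)))
    (lift : ∀ i, ρ i ≠ 0 → ∀ y z, C (σ i) y z → ∃ x, C i x y) (i : ι) :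
    {p : X i × X (σ i) // C i p.1 p.2} :=
  if h : ρ i = 0 then ⟨(s₀ i, s₀ (σ i)), hs₀ i h⟩
  else
    let q := rankRec hρ s₀ hs₀ lift (σ i)
    ⟨((lift i h _ _ q.2).choose, q.1.1), (lift i h _ _ q.2).choose_spec⟩
termination_by ρ i
decreasing_by exact hρ i h

theorem exists_family_of_rank (hρ : ∀ i, ρ i ≠ 0 → ρ (σ i) < ρ i)
    (hρ₀ : ∀ i, ρ i = 0 → ρ (σ i) = 0) (s₀ : ∀ i, X i)
    (hs₀ : ∀ i, ρ i = 0 → C i (s₀ i) (s₀ (σ i)))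
    (lift : ∀ i, ρ i ≠ 0 → ∀ y z, C (σ i) y z → ∃ x, C i x y) :
    ∃ s : ∀ i, X i, (∀ i, ρ i = 0 → s i = s₀ i) ∧ ∀ i, C i (s i) (s (σ i)) := by
  let F := rankRec σ ρ C hρ s₀ hs₀ lift
  have hF₀ : ∀ i, ρ i = 0 → (F i).1 = (s₀ i, s₀ (σ i)) := fun i h => by
    simp only [F]; rw [rankRec, dif_pos h]
  have hF : ∀ i, (F i).1.2 = (F (σ i)).1.1 := fun i => by
    by_cases h : ρ i = 0
    · rw [hF₀ i h, hF₀ (σ i) (hρ₀ i h)]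
    · simp only [F]; rw [rankRec, dif_neg h]
  refine ⟨fun i => (F i).1.1, fun i h => congrArg Prod.fst (hF₀ i h), fun i => ?_⟩
  change C i (F i).1.1 (F (σ i)).1.1
  exact hF i ▸ (F i).2

end RankRecursion

theorem exists_family_of_lift_down (n : ℤ) {X : ℤ → Type*} (C : ∀ i, X i → X (i + 1) → Prop)
    (s₀ : ∀ i, X i) (hs₀ : ∀ i, n ≤ i → C i (s₀ i) (s₀ (i + 1)))
    (lift : ∀ i, i < n → ∀ y z, C (i + 1) y z → ∃ x, C i x y) :
    ∃ s : ∀ i, X i, (∀ i, n ≤ i → s i = s₀ i) ∧ ∀ i, C i (s i) (s (i + 1)) := by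
  obtain ⟨s, hs⟩ := exists_family_of_rank (· + 1) (fun i => (n - i).toNat) C (by omega)
    (by omega) s₀ (fun i hi => hs₀ i (by omega)) (fun i hi => lift i (by omega))
  exact ⟨s, fun i hi => hs.1 i (by omega), hs.2⟩

theorem exists_family_of_lift_up (n : ℤ) {X : ℤ → Type*} (C : ∀ i, X i → X (i - 1) → Prop)
    (s₀ : ∀ i, X i) (hs₀ : ∀ i, i ≤ n → C i (s₀ i) (s₀ (i - 1)))
    (lift : ∀ i, n < i → ∀ y z, C (i - 1) y z → ∃ x, C i x y) :
    ∃ s : ∀ i, X i, (∀ i, i ≤ n → s i = s₀ i) ∧ ∀ i, C i (s i) (s (i - 1)) := by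
  obtain ⟨s, hs⟩ := exists_family_of_rank (· - 1) (fun i => (i - n).toNat) C (by omega)
    (by omega) s₀ (fun i hi => hs₀ i (by omega)) (fun i hi => lift i (by omega))
  exact ⟨s, fun i hi => hs.1 i (by omega), hs.2⟩

section Complexes

variable {C : Type*} [Category C] [Preadditive C] {K L : CochainComplex C ℤ}

theorem nonempty_homotopy_zero_of_d_comp_add (φ : K ⟶ L) (s : ∀ i j, K.X i ⟶ L.X j)
    (hs : ∀ i j k, j = i + 1 → k = j + 1 → φ.f j = K.d j k ≫ s k j + s j i ≫ L.d i j) :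
    Nonempty (Homotopy φ 0) := by
  refine ⟨⟨fun i j => if j + 1 = i then s i j else 0, fun i j hij => if_neg hij, fun i => ?_⟩⟩
  rw [dNext_eq _ (show (ComplexShape.up ℤ).Rel i (i + 1) from rfl),
    prevD_eq _ (show (ComplexShape.up ℤ).Rel (i - 1) i from sub_add_cancel i 1),
    if_pos rfl, if_pos (sub_add_cancel i 1), HomologicalComplex.zero_f, add_zero]
  exact hs (i - 1) i (i + 1) (by ring) rfl

theorem exists_inv_of_isIso_ge (ν : K ⟶ L) (n : ℤ) (hν : ∀ i, n ≤ i → IsIso (ν.f i)) :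
    ∃ w : ∀ i, L.X i ⟶ K.X i, ∀ i, n ≤ i → ν.f i ≫ w i = 𝟙 _ ∧ w i ≫ ν.f i = 𝟙 _ ∧
      w i ≫ K.d i (i + 1) = L.d i (i + 1) ≫ w (i + 1) := by
  refine ⟨fun i => if h : n ≤ i then haveI := hν i h; inv (ν.f i) else 0, fun i hi => ?_⟩
  have := hν i hi
  have := hν (i + 1) (by omega)
  simp only [dif_pos hi, dif_pos (show n ≤ i + 1 by omega), IsIso.hom_inv_id, IsIso.inv_hom_id,
    true_and]
  rw [IsIso.inv_comp_eq, ν.comm_assoc, IsIso.hom_inv_id, Category.comp_id]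

end Complexes

section ModuleComplexes

open HomologicalComplex

variable {R}

theorem ModuleCat.exists_comp_eq_of_ker_le {A B J : ModuleCat.{u} R} [Injective J] (d : A ⟶ B)
    (w : A ⟶ J) (h : LinearMap.ker d.hom ≤ LinearMap.ker w.hom) : ∃ q : B ⟶ J, d ≫ q = w := by
  let S := ShortComplex.mk (ModuleCat.ofHom (LinearMap.ker d.hom).subtype) d
    (by ext x; exact x.2)
  have hS : S.Exact :=
    (ShortComplex.moduleCat_exact_iff_ker_sub_range S).2 fun x hx => ⟨⟨x, hx⟩, rfl⟩
  have hw : S.f ≫ w = 0 := by ext x; exact h x.2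
  exact ⟨hS.descToInjective w hw, hS.comp_descToInjective w hw⟩

theorem ker_d_le_ker_of_exactAt {K : CochainComplex (ModuleCat.{u} R) ℤ} {i : ℤ}
    (hK : K.ExactAt i) {Y : ModuleCat.{u} R} (w : K.X i ⟶ Y) (hw : K.d (i - 1) i ≫ w = 0) :
    LinearMap.ker (K.d i (i + 1)).hom ≤ LinearMap.ker w.hom := by
  rw [K.exactAt_iff' (i - 1) i (i + 1) (by simp) (by simp),
    ShortComplex.moduleCat_exact_iff] at hK
  intro x hx
  obtain ⟨y, rfl⟩ := hK x hx
  change (K.d (i - 1) i ≫ w) y = 0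
  rw [hw]
  rfl

theorem ker_le_ker_of_isZero {A B Y : ModuleCat.{u} R} (hA : IsZero A) (d : A ⟶ B) (w : A ⟶ Y) :
    LinearMap.ker d.hom ≤ LinearMap.ker w.hom := by
  rw [hA.eq_of_src w 0, ModuleCat.hom_zero, LinearMap.ker_zero]
  exact le_top

theorem IsTotallyAcyclicInjCpx.exists_comp_d_eq {V : CochainComplex (ModuleCat.{u} R) ℤ}
    (hV : IsTotallyAcyclicInjCpx R V) {A : ModuleCat.{u} R} [Injective A] {i : ℤ}
    (g : A ⟶ V.X (i + 1)) (hg : g ≫ V.d (i + 1) (i + 1 + 1) = 0) :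
    ∃ h : A ⟶ V.X i, h ≫ V.d i (i + 1) = g := by
  have := hV.hom_acyclic A inferInstance (i + 1) g hg
  rwa [add_sub_cancel_right] at this

section Resolution

variable {M : ModuleCat.{u} R} {I J : CochainComplex (ModuleCat.{u} R) ℤ} {ι : M ⟶ I.X 0}

theorem IsInjRes.ι_comp_d (hI : IsInjRes R M I ι) : ι ≫ I.d 0 1 = 0 := by
  ext m
  exact hI.exact_zero.le (LinearMap.mem_range_self ι.hom m)

theorem IsInjRes.ker_d_le_ker (hI : IsInjRes R M I ι) {Y : ModuleCat.{u} R} (w : I.X 0 ⟶ Y)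
    (hw : ι ≫ w = 0) : LinearMap.ker (I.d 0 1).hom ≤ LinearMap.ker w.hom := by
  rw [← hI.exact_zero]
  rintro _ ⟨m, rfl⟩
  change (ι ≫ w) m = 0
  rw [hw]
  rfl

theorem IsInjRes.exists_lift (hI : IsInjRes R M I ι) (hJ : ∀ i, Injective (J.X i))
    {ι' : M ⟶ J.X 0} (hι' : ι' ≫ J.d 0 1 = 0) : ∃ α : I ⟶ J, ι ≫ α.f 0 = ι' := by
  have : Mono ι := (ModuleCat.mono_iff_injective ι).2 hI.mono
  have := hJ 0
  -- The kernel condition on `x` is what makes the next extension step possible.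
  obtain ⟨s, hs₀, hs⟩ := exists_family_of_lift_up 0 (X := fun i => I.X i ⟶ J.X i)
    (fun i x y => I.d (i - 1) i ≫ x = y ≫ J.d (i - 1) i ∧
      LinearMap.ker (I.d i (i + 1)).hom ≤ LinearMap.ker (x ≫ J.d i (i + 1)).hom)
    (Pi.single 0 (Injective.factorThru ι' ι))
    (fun i hi => by
      refine ⟨(hI.zero_neg (i - 1) (by omega)).eq_of_src _ _, ?_⟩
      obtain hi | rfl := hi.lt_or_eq
      · exact ker_le_ker_of_isZero (hI.zero_neg i hi) _ _
      · exact hI.ker_d_le_ker _ (by simp [hι']))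
    (fun i hi y _ hy => by
      rw [sub_add_cancel] at hy
      have := hJ i
      obtain ⟨x, hx⟩ := ModuleCat.exists_comp_eq_of_ker_le _ _ hy.2
      exact ⟨x, hx, ker_d_le_ker_of_exactAt (hI.exact_pos i hi) _
        (by rw [reassoc_of% hx, d_comp_d, Limits.comp_zero])⟩)
  refine ⟨⟨s, fun i j hij => ?_⟩, ?_⟩
  · obtain rfl : i = j - 1 := by simp at hij; omega
    exact (hs j).1.symm
  · simp [hs₀ 0 le_rfl]

theorem IsInjRes.nonempty_homotopy_zero (hI : IsInjRes R M I ι) (hJ : ∀ i, Injective (J.X i))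
    (φ : I ⟶ J) (hφ : ι ≫ φ.f 0 = 0) : Nonempty (Homotopy φ 0) := by
  obtain ⟨s, -, hs⟩ := exists_family_of_lift_up 0 (X := fun i => ∀ j, I.X i ⟶ J.X j)
    (fun i x y =>
      I.d (i - 1) i ≫ x (i - 1) = φ.f (i - 1) - y (i - 1 - 1) ≫ J.d (i - 1 - 1) (i - 1) ∧
      LinearMap.ker (I.d i (i + 1)).hom ≤ LinearMap.ker (φ.f i - x (i - 1) ≫ J.d (i - 1) i).hom)
    0
    (fun i hi => by
      refine ⟨(hI.zero_neg (i - 1) (by omega)).eq_of_src _ _, ?_⟩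
      obtain hi | rfl := hi.lt_or_eq
      · exact ker_le_ker_of_isZero (hI.zero_neg i hi) _ _
      · exact hI.ker_d_le_ker _ (by simp [hφ]))
    (fun i hi y _ hy => by
      rw [sub_add_cancel] at hy
      have := hJ (i - 1)
      obtain ⟨v, hv⟩ := ModuleCat.exists_comp_eq_of_ker_le _ _ hy.2
      refine ⟨Pi.single (i - 1) v, by simpa using hv,
        ker_d_le_ker_of_exactAt (hI.exact_pos i hi) _ ?_⟩
      rw [Pi.single_eq_same, Preadditive.comp_sub, reassoc_of% hv, ← φ.comm]
      simp)
  refine nonempty_homotopy_zero_of_d_comp_add φ s fun i j k hij hjk => ?_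
  obtain rfl : j = k - 1 := by omega
  obtain rfl : i = k - 1 - 1 := by omega
  rw [(hs k).1]
  abel

end Resolution

end ModuleComplexes

section TotallyAcyclic

open HomologicalComplex

variable {R} {U V : CochainComplex (ModuleCat.{u} R) ℤ}

theorem exists_hom_eq_of_ge (hU : ∀ i, Injective (U.X i)) (hV : IsTotallyAcyclicInjCpx R V)
    (n : ℤ) (φ : ∀ i, U.X i ⟶ V.X i)
    (hφ : ∀ i, n ≤ i → φ i ≫ V.d i (i + 1) = U.d i (i + 1) ≫ φ (i + 1)) :
    ∃ f : U ⟶ V, ∀ i, n ≤ i → f.f i = φ i := by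
  obtain ⟨s, hs₀, hs⟩ := exists_family_of_lift_down n (X := fun i => U.X i ⟶ V.X i)
    (fun i x y => x ≫ V.d i (i + 1) = U.d i (i + 1) ≫ y) φ hφ
    (fun i _ y _ hy => by
      have := hU i
      exact hV.exists_comp_d_eq _ (by rw [Category.assoc, hy, d_comp_d_assoc, zero_comp]))
  exact ⟨⟨s, fun i j hij => by subst hij; exact hs i⟩, hs₀⟩

theorem nonempty_homotopy_zero_of_ge (hU : ∀ i, Injective (U.X i))
    (hV : IsTotallyAcyclicInjCpx R V) (n : ℤ) (φ : U ⟶ V) (s₀ : ∀ i j, U.X i ⟶ V.X j)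
    (hs₀ : ∀ i, n ≤ i → φ.f i = U.d i (i + 1) ≫ s₀ (i + 1) i + s₀ i (i - 1) ≫ V.d (i - 1) i) :
    Nonempty (Homotopy φ 0) := by
  obtain ⟨s, -, hs⟩ := exists_family_of_lift_down n (X := fun i => ∀ j, U.X i ⟶ V.X j)
    (fun i x y => φ.f i = U.d i (i + 1) ≫ y i + x (i - 1) ≫ V.d (i - 1) i) s₀ hs₀
    (fun i _ y _ hy => by
      rw [add_sub_cancel_right] at hy
      obtain ⟨v, hv⟩ := hV.hom_acyclic _ (hU i) i (φ.f i - U.d i (i + 1) ≫ y i)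
        (by rw [Preadditive.sub_comp, φ.comm, hy]; simp)
      exact ⟨Pi.single (i - 1) v, by simp [hv]⟩)
  refine nonempty_homotopy_zero_of_d_comp_add φ s fun i j k hij hjk => ?_
  obtain rfl : i = j - 1 := by omega
  subst hjk
  exact hs j

variable {I J : CochainComplex (ModuleCat.{u} R) ℤ}

theorem exists_hom_comm_of_isIso_ge (ν : I ⟶ U) (ν' : J ⟶ V) (n : ℤ)
    (hν : ∀ i, n ≤ i → IsIso (ν.f i)) (hU : ∀ i, Injective (U.X i))
    (hV : IsTotallyAcyclicInjCpx R V) (ψ : I ⟶ J) :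
    ∃ φ : U ⟶ V, ∀ i, n ≤ i → ν.f i ≫ φ.f i = ψ.f i ≫ ν'.f i := by
  obtain ⟨w, hw⟩ := exists_inv_of_isIso_ge ν n hν
  obtain ⟨φ, hφ⟩ := exists_hom_eq_of_ge hU hV n (fun i => w i ≫ ψ.f i ≫ ν'.f i)
    (fun i hi => by simp only [Category.assoc, ν'.comm, ψ.comm_assoc, reassoc_of% (hw i hi).2.2])
  exact ⟨φ, fun i hi => by rw [hφ i hi, reassoc_of% (hw i hi).1]⟩

theorem nonempty_homotopy_zero_of_isIso_ge (ν : I ⟶ U) (ν' : J ⟶ V) (n : ℤ)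
    (hν : ∀ i, n ≤ i → IsIso (ν.f i)) (hU : ∀ i, Injective (U.X i))
    (hV : IsTotallyAcyclicInjCpx R V) {φ : U ⟶ V} {ψ : I ⟶ J}
    (hφψ : ∀ i, n ≤ i → ν.f i ≫ φ.f i = ψ.f i ≫ ν'.f i) (H : Homotopy ψ 0) :
    Nonempty (Homotopy φ 0) := by
  obtain ⟨w, hw⟩ := exists_inv_of_isIso_ge ν n hν
  refine nonempty_homotopy_zero_of_ge hU hV n φ (fun i j => w i ≫ H.hom i j ≫ ν'.f j)
    fun i hi => ?_
  have hH := H.comm i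
  rw [dNext_eq _ (show (ComplexShape.up ℤ).Rel i (i + 1) from rfl),
    prevD_eq _ (show (ComplexShape.up ℤ).Rel (i - 1) i from sub_add_cancel i 1),
    zero_f, add_zero] at hH
  rw [← (reassoc_of% (hw i hi).2.1) (φ.f i), hφψ i hi, hH]
  simp only [Preadditive.add_comp, Preadditive.comp_add, Category.assoc, ν'.comm,
    reassoc_of% (hw i hi).2.2]

end TotallyAcyclic

theorem exists_iso_biprod_of_comp_eq_id {C : Type*} [Category C] [Abelian C] {κ : Type*}
    {c : ComplexShape κ} {U V : HomologicalComplex C c} (f : U ⟶ V) (g : V ⟶ U)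
    (hfg : f ≫ g = 𝟙 U) (H : Homotopy (g ≫ f) (𝟙 V)) :
    ∃ W : HomologicalComplex C c, Nonempty (Homotopy (𝟙 W) 0) ∧ Nonempty (V ≅ U ⊞ W) := by
  let q : V ⟶ kernel g := kernel.lift g (𝟙 V - g ≫ f) (by simp [hfg])
  have hq : q ≫ kernel.ι g = 𝟙 V - g ≫ f := kernel.lift_ι _ _ _
  have hιq : kernel.ι g ≫ q = 𝟙 _ := by
    rw [← cancel_mono (kernel.ι g), Category.assoc, hq]
    simp
  refine ⟨kernel g, ⟨?_⟩, ⟨⟨biprod.lift g q, biprod.desc f (kernel.ι g), ?_, ?_⟩⟩⟩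
  · refine (Homotopy.ofEq ?_).trans (((H.compLeft (kernel.ι g)).compRight q).symm.trans
      (Homotopy.ofEq ?_))
    · simp [hιq]
    · simp
  · simp [hq]
  · apply biprod.hom_ext' <;> apply biprod.hom_ext <;>
      simp [hfg, hιq, ← cancel_mono (kernel.ι g), hq, reassoc_of% hfg]

variable {R} in
theorem IsMinimalCpx.exists_iso_biprod {U V : CochainComplex (ModuleCat.{u} R) ℤ}
    (hU : IsMinimalCpx R U) (e : HomotopyEquiv U V) :
    ∃ W, ContractibleCpx R W ∧ Nonempty (V ≅ U ⊞ W) := by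
  have : IsIso (e.hom ≫ e.inv) := hU (e.trans e.symm)
  let p := inv (e.hom ≫ e.inv)
  have hp : Homotopy p (𝟙 U) := (Homotopy.ofEq (Category.comp_id p).symm).trans
    ((e.homotopyHomInvId.symm.compLeft p).trans (Homotopy.ofEq (IsIso.inv_hom_id _)))
  refine exists_iso_biprod_of_comp_eq_id e.hom (e.inv ≫ p)
    ((Category.assoc _ _ _).symm.trans (IsIso.hom_inv_id _)) ?_
  exact (Homotopy.ofEq (Category.assoc _ _ _)).trans (((hp.compRight e.hom).compLeft e.inv).trans
    ((Homotopy.ofEq (by simp)).trans e.homotopyInvHomId))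

section CompleteResolution

variable {R} {M : ModuleCat.{u} R} {I J U V : CochainComplex (ModuleCat.{u} R) ℤ}
  {ι : M ⟶ I.X 0} {ν : I ⟶ U} {ι' : M ⟶ J.X 0} {ν' : J ⟶ V}

theorem IsCompleteInjRes.nonempty_homotopy_comp (hU : IsCompleteInjRes R M I U ι ν) {n : ℤ}
    (hν : ∀ i, n ≤ i → IsIso (ν.f i)) {α : I ⟶ J} {β : J ⟶ I} (hαβ : ι ≫ α.f 0 ≫ β.f 0 = ι)
    {f : U ⟶ V} {g : V ⟶ U} (hf : ∀ i, n ≤ i → ν.f i ≫ f.f i = α.f i ≫ ν'.f i)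
    (hg : ∀ i, n ≤ i → ν'.f i ≫ g.f i = β.f i ≫ ν.f i) :
    Nonempty (Homotopy (f ≫ g) (𝟙 U)) := by
  obtain ⟨H⟩ := hU.res.nonempty_homotopy_zero hU.res.inj (α ≫ β - 𝟙 I) (by simp [hαβ])
  obtain ⟨H'⟩ := nonempty_homotopy_zero_of_isIso_ge ν ν n hν hU.totAcyclic.inj hU.totAcyclic
    (φ := f ≫ g - 𝟙 U) (fun i hi => by simp [reassoc_of% (hf i hi), hg i hi]) H
  exact ⟨Homotopy.equivSubZero.symm H'⟩

theorem IsCompleteInjRes.nonempty_homotopyEquiv (hU : IsCompleteInjRes R M I U ι ν)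
    (hV : IsCompleteInjRes R M J V ι' ν') : Nonempty (HomotopyEquiv U V) := by
  obtain ⟨n₁, hν⟩ := hU.iso_ge
  obtain ⟨n₂, hν'⟩ := hV.iso_ge
  have hν : ∀ i, max n₁ n₂ ≤ i → IsIso (ν.f i) := fun i hi => hν i (le_of_max_le_left hi)
  have hν' : ∀ i, max n₁ n₂ ≤ i → IsIso (ν'.f i) := fun i hi => hν' i (le_of_max_le_right hi)
  obtain ⟨α, hα⟩ := hU.res.exists_lift hV.res.inj hV.res.ι_comp_d
  obtain ⟨β, hβ⟩ := hV.res.exists_lift hU.res.inj hU.res.ι_comp_d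
  obtain ⟨f, hf⟩ := exists_hom_comm_of_isIso_ge ν ν' _ hν hU.totAcyclic.inj hV.totAcyclic α
  obtain ⟨g, hg⟩ := exists_hom_comm_of_isIso_ge ν' ν _ hν' hV.totAcyclic.inj hU.totAcyclic β
  obtain ⟨Hfg⟩ := hU.nonempty_homotopy_comp hν (by rw [reassoc_of% hα, hβ]) hf hg
  obtain ⟨Hgf⟩ := hV.nonempty_homotopy_comp hν' (by rw [reassoc_of% hβ, hα]) hg hf
  exact ⟨⟨f, g, Hfg, Hgf⟩⟩

end CompleteResolution

theorem minimal_cir_summand_general (R : Type u) [CommRing R] (M : ModuleCat.{u} R)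
    (I U : CochainComplex (ModuleCat.{u} R) ℤ) (ι : M ⟶ I.X 0) (ν : I ⟶ U)
    (hU : IsCompleteInjRes R M I U ι ν) (hUmin : IsMinimalCpx R U)
    (J V : CochainComplex (ModuleCat.{u} R) ℤ) (ι' : M ⟶ J.X 0) (ν' : J ⟶ V)
    (hV : IsCompleteInjRes R M J V ι' ν') :
    ∃ W : CochainComplex (ModuleCat.{u} R) ℤ,
      ContractibleCpx R W ∧ Nonempty (V ≅ U ⊞ W) := by
  obtain ⟨e⟩ := hU.nonempty_homotopyEquiv hV
  exact hUmin.exists_iso_biprod e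

/-- If `U` is a minimal complete injective resolution of `M` and `V` is any
other complete injective resolution of `M`, then `U` is a direct summand of `V` with
contractible complementary summand. -/
theorem minimal_cir_summand (R : Type u) [CommRing R] (M : ModuleCat.{u} R)
    (I U : CochainComplex (ModuleCat.{u} R) ℤ) (ι : M ⟶ I.X 0) (ν : I ⟶ U)
    (hU : IsCompleteInjRes R M I U ι ν) (hImin : IsMinimalCpx R I) (hUmin : IsMinimalCpx R U)
    (J V : CochainComplex (ModuleCat.{u} R) ℤ) (ι' : M ⟶ J.X 0) (ν' : J ⟶ V)
    (hV : IsCompleteInjRes R M J V ι' ν') :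
    ∃ W : CochainComplex (ModuleCat.{u} R) ℤ,
      ContractibleCpx R W ∧ Nonempty (V ≅ U ⊞ W) :=
  minimal_cir_summand_general R M I U ι ν hU hUmin J V ι' ν' hV
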